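/- Given a 'scheme' on a Boolean algebra B — a partition 1 = a₀ ∪ a₁ ∪ b₀ ∪ … ∪ b_{n−1} ∪ c₀ ∪ … ∪ c_{m−1}, maximal nonprincipal ideals I_ℓ of B↾b_ℓ for ℓ < n, nonprincipal disjoint ideals I⁰_ℓ, I¹_ℓ below c_ℓ whose generated ideal is maximal in B↾c_ℓ for ℓ < m, a number k ≤ n, and a partition b*₀,…,b*_{n−1}, c*₀,…,c*_{m−1} of a₀ ∪ b₀ ∪ … ∪ b_{k−1} — there is a unique endomorphism T of B satisfying: T(x)=0 for x ≤ a₀ or x ∈ I_ℓ (ℓ<k) or x ∈ I⁰_ℓ; T(x)=x for x ≤ a₁ or x ∈ I_ℓ (k ≤ ℓ < n) or x ∈ I¹_ℓ; T(b_ℓ)=b*_ℓ for ℓ<k; T(b_ℓ)=b_ℓ ∪ b*_ℓ for k ≤ ℓ < n; T(c_ℓ)=c_ℓ ∪ c*_ℓ for ℓ<m. -/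
import Mathlib

open scoped Classical


variable {B : Type*} [BooleanAlgebra B]

/-- `h` is an endomorphism of the Boolean algebra. -/
def IsEndo (h : B → B) : Prop :=
  (∀ x y, h (x ⊔ y) = h x ⊔ h y) ∧ (∀ x y, h (x ⊓ y) = h x ⊓ h y) ∧ h ⊥ = ⊥ ∧ h ⊤ = ⊤

/-- `I` is an ideal of the relative algebra `B↾e` (elements below `e`). -/
def IsIdealBelow (e : B) (I : Set B) : Prop :=
  ⊥ ∈ I ∧ (∀ z ∈ I, z ≤ e) ∧ (∀ a b : B, b ∈ I → a ≤ b → a ∈ I) ∧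
    (∀ a ∈ I, ∀ b ∈ I, a ⊔ b ∈ I)

/-- `I` is a nonprincipal ideal of `B↾e`. -/
def Nonprincipal (I : Set B) : Prop := ∀ g ∈ I, ∃ z ∈ I, ¬ z ≤ g

/- ### generic helpers -/

lemma inf_sdiff_eq (x y w : B) : (x ⊓ y) \ w = x \ w ⊓ y \ w := by
  rw [sdiff_eq, sdiff_eq, sdiff_eq, inf_inf_inf_comm, inf_idem]

lemma compl_piece {p q r : B} (hpq : p ⊔ q = r) (hd : p ⊓ q = ⊥) : p = r \ q := by
  have hp : p ≤ qᶜ := le_compl_iff_disjoint_right.mpr (disjoint_iff.mpr hd)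
  rw [← hpq, sup_sdiff, sdiff_self, sup_bot_eq, sdiff_eq, inf_eq_left.mpr hp]

lemma sup_single {ι : Type*} [Fintype ι] [DecidableEq ι] (f : ι → B) (i : ι)
    (h : ∀ j, j ≠ i → f j = ⊥) : Finset.univ.sup f = f i := by
  refine le_antisymm (Finset.sup_le fun j _ => ?_) (Finset.le_sup (Finset.mem_univ i))
  by_cases hj : j = i
  · subst hj; exact le_rfl
  · rw [h j hj]; exact bot_le

lemma sup_all_bot {ι : Type*} (s : Finset ι) (f : ι → B) (h : ∀ j ∈ s, f j = ⊥) :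
    s.sup f = ⊥ :=
  le_bot_iff.mp (Finset.sup_le fun j hj => le_of_eq (h j hj))

lemma sup_pointwise {ι : Type*} (s : Finset ι) (f g : ι → B) :
    (s.sup fun i => f i ⊔ g i) = s.sup f ⊔ s.sup g := by
  have : (fun i => f i ⊔ g i) = f ⊔ g := rfl
  rw [this, Finset.sup_sup]

lemma sup_inf_diag {ι : Type*} [Fintype ι] [DecidableEq ι] (f g : ι → B)
    (h : ∀ i j, i ≠ j → f i ⊓ g j = ⊥) :
    Finset.univ.sup f ⊓ Finset.univ.sup g = Finset.univ.sup fun i => f i ⊓ g i := by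
  rw [Finset.sup_inf_distrib_right]
  refine Finset.sup_congr rfl fun i _ => ?_
  rw [Finset.sup_inf_distrib_left]
  exact sup_single _ i fun j hj => h i j (Ne.symm hj)

lemma disjoint_finsup_right {ι : Type*} {s : Finset ι} {f : ι → B} {a : B}
    (h : ∀ i ∈ s, Disjoint a (f i)) : Disjoint a (s.sup f) := by
  rw [disjoint_iff, Finset.sup_inf_distrib_left]
  exact sup_all_bot _ _ fun j hj => disjoint_iff.mp (h j hj)

lemma endo_finset_sup {h : B → B} (hsup : ∀ x y, h (x ⊔ y) = h x ⊔ h y) (hbot : h ⊥ = ⊥)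
    {ι : Type*} (s : Finset ι) (f : ι → B) : h (s.sup f) = s.sup fun i => h (f i) := by
  induction s using Finset.cons_induction with
  | empty => simpa using hbot
  | cons a s ha ih => rw [Finset.sup_cons, Finset.sup_cons, hsup, ih]

/- ### the c-piece machinery -/

/-- Case A: `z` is in the ideal generated by `I0 ∪ I1`. -/
def CA (I0 I1 : Set B) (z : B) : Prop := ∃ u ∈ I0, ∃ v ∈ I1, z ≤ u ⊔ v

noncomputable def TAux (I0 I1 : Set B) (z : B) : B :=
  if h : ∃ u ∈ I0, ∃ v ∈ I1, z ≤ u ⊔ v then z \ h.choose else ⊥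

section CPiece

variable {I0 I1 : Set B} {c cs : B}
variable (hd : ∀ u ∈ I0, ∀ v ∈ I1, u ⊓ v = ⊥)
variable (h0 : IsIdealBelow c I0) (h1 : IsIdealBelow c I1)
variable (hm1 : ¬ ∃ u ∈ I0, ∃ v ∈ I1, c ≤ u ⊔ v)
variable (hm2 : ∀ z ≤ c, CA I0 I1 z ∨ CA I0 I1 (c \ z))

lemma CA_mono {z z' : B} (hzz : z' ≤ z) (h : CA I0 I1 z) : CA I0 I1 z' := by
  obtain ⟨u, hu, v, hv, hz⟩ := h
  exact ⟨u, hu, v, hv, hzz.trans hz⟩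

include h0 h1 in
lemma CA_bot : CA I0 I1 (⊥ : B) := ⟨⊥, h0.1, ⊥, h1.1, by simp⟩

include h0 h1 in
lemma CA_sup {z z' : B} (h : CA I0 I1 z) (h' : CA I0 I1 z') : CA I0 I1 (z ⊔ z') := by
  obtain ⟨u, hu, v, hv, hz⟩ := h
  obtain ⟨u', hu', v', hv', hz'⟩ := h'
  exact ⟨u ⊔ u', h0.2.2.2 u hu u' hu', v ⊔ v', h1.2.2.2 v hv v' hv',
    sup_le (hz.trans (sup_le_sup le_sup_left le_sup_left))
      (hz'.trans (sup_le_sup le_sup_right le_sup_right))⟩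

lemma TAux_le (z : B) : TAux I0 I1 z ≤ z := by
  unfold TAux; split
  · exact sdiff_le
  · exact bot_le

include hd in
lemma sdiff_le_sdiff_of {z u v u' : B} (hu : u ∈ I0) (hv : v ∈ I1) (hz : z ≤ u ⊔ v)
    (hu' : u' ∈ I0) : z \ u ≤ z \ u' := by
  have h1 : z \ u ≤ v := sdiff_le_iff.mpr hz
  have h2 : z \ u ⊓ u' = ⊥ := by
    refine le_bot_iff.mp ?_
    calc z \ u ⊓ u' ≤ v ⊓ u' := inf_le_inf_right _ h1
    _ = ⊥ := by rw [inf_comm]; exact hd u' hu' v hv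
  rw [sdiff_eq (y := u')]
  exact le_inf sdiff_le ((disjoint_iff.mpr h2).le_compl_right)

include hd in
lemma TAux_eq {z u v : B} (hu : u ∈ I0) (hv : v ∈ I1) (hz : z ≤ u ⊔ v) :
    TAux I0 I1 z = z \ u := by
  have hA : ∃ u ∈ I0, ∃ v ∈ I1, z ≤ u ⊔ v := ⟨u, hu, v, hv, hz⟩
  unfold TAux
  rw [dif_pos hA]
  obtain ⟨hu0, v0, hv0, hz0⟩ := hA.choose_spec
  exact le_antisymm (sdiff_le_sdiff_of hd hu0 hv0 hz0 hu) (sdiff_le_sdiff_of hd hu hv hz hu0)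

include hd h1 in
lemma TAux_mem1 {z : B} (hA : CA I0 I1 z) : TAux I0 I1 z ∈ I1 := by
  obtain ⟨u, hu, v, hv, hz⟩ := hA
  rw [TAux_eq hd hu hv hz]
  exact h1.2.2.1 _ v hv (sdiff_le_iff.mpr hz)

include hd h0 h1 in
lemma TAux_bot : TAux I0 I1 (⊥ : B) = ⊥ := by
  rw [TAux_eq hd h0.1 h1.1 (by simp), bot_sdiff]

include hd h0 h1 in
lemma TAux_sup {z z' : B} (h : CA I0 I1 z) (h' : CA I0 I1 z') :
    TAux I0 I1 (z ⊔ z') = TAux I0 I1 z ⊔ TAux I0 I1 z' := by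
  obtain ⟨u, hu, v, hv, hz⟩ := h
  obtain ⟨u', hu', v', hv', hz'⟩ := h'
  have hU : u ⊔ u' ∈ I0 := h0.2.2.2 u hu u' hu'
  have hV : v ⊔ v' ∈ I1 := h1.2.2.2 v hv v' hv'
  have hzU : z ≤ (u ⊔ u') ⊔ (v ⊔ v') := hz.trans (sup_le_sup le_sup_left le_sup_left)
  have hz'U : z' ≤ (u ⊔ u') ⊔ (v ⊔ v') := hz'.trans (sup_le_sup le_sup_right le_sup_right)
  rw [TAux_eq hd hU hV (sup_le hzU hz'U), TAux_eq hd hU hV hzU, TAux_eq hd hU hV hz'U,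
    sup_sdiff]

include hd h0 h1 in
lemma TAux_inf {z z' : B} (h : CA I0 I1 z) (h' : CA I0 I1 z') :
    TAux I0 I1 (z ⊓ z') = TAux I0 I1 z ⊓ TAux I0 I1 z' := by
  obtain ⟨u, hu, v, hv, hz⟩ := h
  obtain ⟨u', hu', v', hv', hz'⟩ := h'
  have hU : u ⊔ u' ∈ I0 := h0.2.2.2 u hu u' hu'
  have hV : v ⊔ v' ∈ I1 := h1.2.2.2 v hv v' hv'
  have hzU : z ≤ (u ⊔ u') ⊔ (v ⊔ v') := hz.trans (sup_le_sup le_sup_left le_sup_left)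
  have hz'U : z' ≤ (u ⊔ u') ⊔ (v ⊔ v') := hz'.trans (sup_le_sup le_sup_right le_sup_right)
  rw [TAux_eq hd hU hV (inf_le_left.trans hzU), TAux_eq hd hU hV hzU, TAux_eq hd hU hV hz'U,
    inf_sdiff_eq]

include hd h0 h1 in
lemma TAux_mono {z z' : B} (h : CA I0 I1 z) (h' : CA I0 I1 z') (hzz : z ≤ z') :
    TAux I0 I1 z ≤ TAux I0 I1 z' := by
  have := TAux_sup hd h0 h1 h h'
  rw [sup_eq_right.mpr hzz] at this
  rw [this]
  exact le_sup_left

include h0 h1 hm1 in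
lemma CA_not_both {z : B} (hz : z ≤ c) (h : CA I0 I1 z) (h' : CA I0 I1 (c \ z)) : False := by
  have := CA_sup h0 h1 h h'
  rw [sup_sdiff_cancel_right hz] at this
  exact hm1 this

end CPiece

noncomputable def Tc1 (I0 I1 : Set B) (c cs : B) (z : B) : B :=
  if CA I0 I1 z then TAux I0 I1 z else (c ⊔ cs) \ TAux I0 I1 (c \ z)

section Tc1Sec

variable {I0 I1 : Set B} {c cs : B}
variable (hd : ∀ u ∈ I0, ∀ v ∈ I1, u ⊓ v = ⊥)
variable (h0 : IsIdealBelow c I0) (h1 : IsIdealBelow c I1)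
variable (hm1 : ¬ ∃ u ∈ I0, ∃ v ∈ I1, c ≤ u ⊔ v)
variable (hm2 : ∀ z ≤ c, CA I0 I1 z ∨ CA I0 I1 (c \ z))

lemma Tc1_A {z : B} (hA : CA I0 I1 z) : Tc1 I0 I1 c cs z = TAux I0 I1 z := if_pos hA

lemma Tc1_B {z : B} (hB : ¬ CA I0 I1 z) :
    Tc1 I0 I1 c cs z = (c ⊔ cs) \ TAux I0 I1 (c \ z) := if_neg hB

include hd h0 h1 in
lemma Tc1_bot : Tc1 I0 I1 c cs (⊥ : B) = ⊥ := by
  rw [Tc1_A (CA_bot h0 h1), TAux_bot hd h0 h1]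

lemma Tc1_le {z : B} (hz : z ≤ c) : Tc1 I0 I1 c cs z ≤ c ⊔ cs := by
  unfold Tc1; split
  · exact ((TAux_le z).trans hz).trans le_sup_left
  · exact sdiff_le

include hd h1 in
lemma Tc1_I0 {z : B} (hz : z ∈ I0) : Tc1 I0 I1 c cs z = ⊥ := by
  have hA : CA I0 I1 z := ⟨z, hz, ⊥, h1.1, by simp⟩
  rw [Tc1_A hA, TAux_eq hd hz h1.1 (by simp), sdiff_self]

include hd h0 in
lemma Tc1_I1 {z : B} (hz : z ∈ I1) : Tc1 I0 I1 c cs z = z := by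
  have hA : CA I0 I1 z := ⟨⊥, h0.1, z, hz, by simp⟩
  rw [Tc1_A hA, TAux_eq hd h0.1 hz (by simp), sdiff_bot]

include hd h0 h1 hm1 in
lemma Tc1_top : Tc1 I0 I1 c cs c = c ⊔ cs := by
  rw [Tc1_B hm1, sdiff_self, TAux_bot hd h0 h1, sdiff_bot]

lemma sdiff_decomp {z z' : B} (hz : z ≤ c) : c \ z' = c \ (z ⊔ z') ⊔ (c \ z') ⊓ z := by
  have h : (c \ z') \ z = c \ (z ⊔ z') := by rw [sdiff_sdiff_left, sup_comm]
  calc c \ z' = (c \ z') ⊓ z ⊔ (c \ z') \ z := (sup_inf_sdiff _ _).symm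
  _ = c \ (z ⊔ z') ⊔ (c \ z') ⊓ z := by rw [h, sup_comm]

include hd h0 h1 hm2 in
lemma Tc1_sup_AB {z z' : B} (hz : z ≤ c) (hz' : z' ≤ c)
    (hA : CA I0 I1 z) (hB : ¬ CA I0 I1 z') :
    Tc1 I0 I1 c cs (z ⊔ z') = Tc1 I0 I1 c cs z ⊔ Tc1 I0 I1 c cs z' := by
  have hBzz : ¬ CA I0 I1 (z ⊔ z') := fun h => hB (CA_mono le_sup_right h)
  have hp : CA I0 I1 (c \ (z ⊔ z')) := (hm2 _ (sup_le hz hz')).resolve_left hBzz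
  have hr : CA I0 I1 ((c \ z') ⊓ z) := CA_mono inf_le_right hA
  set X := c ⊔ cs with hX
  set Z := TAux I0 I1 z with hZ
  set P := TAux I0 I1 (c \ (z ⊔ z')) with hP
  set R := TAux I0 I1 ((c \ z') ⊓ z) with hR
  have hTq : TAux I0 I1 (c \ z') = P ⊔ R := by
    conv_lhs => rw [sdiff_decomp (z := z) hz]
    exact TAux_sup hd h0 h1 hp hr
  rw [Tc1_B hBzz, Tc1_A hA, Tc1_B hB, hTq]
  have hRZ : R ≤ Z := TAux_mono hd h0 h1 hr hA inf_le_right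
  have hZX : Z ≤ X \ P := by
    have h1' : Z ≤ X := ((TAux_le z).trans hz).trans le_sup_left
    have hpz : c \ (z ⊔ z') ≤ zᶜ := by
      rw [sdiff_eq]; exact inf_le_right.trans (compl_le_compl le_sup_left)
    have h2' : Z ⊓ P = ⊥ := by
      refine le_bot_iff.mp ?_
      calc Z ⊓ P ≤ z ⊓ zᶜ := inf_le_inf (TAux_le _) ((TAux_le _).trans hpz)
      _ = ⊥ := inf_compl_eq_bot
    rw [sdiff_eq]
    exact le_inf h1' ((disjoint_iff.mpr h2').le_compl_right)
  have h2 : X \ P ≤ Z ⊔ X \ R := by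
    calc X \ P ≤ X := sdiff_le
    _ = X ⊓ R ⊔ X \ R := (sup_inf_sdiff _ _).symm
    _ ≤ Z ⊔ X \ R := sup_le_sup_right (inf_le_right.trans hRZ) _
  symm
  calc Z ⊔ X \ (P ⊔ R) = (Z ⊔ X \ P) ⊓ (Z ⊔ X \ R) := by rw [sdiff_sup, sup_inf_left]
  _ = X \ P ⊓ (Z ⊔ X \ R) := by rw [sup_eq_right.mpr hZX]
  _ = X \ P := inf_eq_left.mpr h2

include hd h0 h1 hm1 hm2 in
lemma Tc1_sup {z z' : B} (hz : z ≤ c) (hz' : z' ≤ c) :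
    Tc1 I0 I1 c cs (z ⊔ z') = Tc1 I0 I1 c cs z ⊔ Tc1 I0 I1 c cs z' := by
  by_cases hA : CA I0 I1 z <;> by_cases hA' : CA I0 I1 z'
  · rw [Tc1_A (CA_sup h0 h1 hA hA'), Tc1_A hA, Tc1_A hA', TAux_sup hd h0 h1 hA hA']
  · exact Tc1_sup_AB hd h0 h1 hm2 hz hz' hA hA'
  · rw [sup_comm z z', sup_comm (Tc1 I0 I1 c cs z)]
    exact Tc1_sup_AB hd h0 h1 hm2 hz' hz hA' hA
  · have hBzz : ¬ CA I0 I1 (z ⊔ z') := fun h => hA (CA_mono le_sup_left h)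
    have hq : CA I0 I1 (c \ z) := (hm2 z hz).resolve_left hA
    have hq' : CA I0 I1 (c \ z') := (hm2 z' hz').resolve_left hA'
    rw [Tc1_B hBzz, Tc1_B hA, Tc1_B hA', sdiff_sup (y := c), TAux_inf hd h0 h1 hq hq']
    rw [sdiff_inf]

include hd h0 h1 hm2 in
lemma Tc1_inf_AB {z z' : B} (hz : z ≤ c) (hz' : z' ≤ c)
    (hA : CA I0 I1 z) (hB : ¬ CA I0 I1 z') :
    Tc1 I0 I1 c cs (z ⊓ z') = Tc1 I0 I1 c cs z ⊓ Tc1 I0 I1 c cs z' := by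
  have hAzz : CA I0 I1 (z ⊓ z') := CA_mono inf_le_left hA
  have hq : CA I0 I1 (c \ z') := (hm2 z' hz').resolve_left hB
  rw [Tc1_A hAzz, Tc1_A hA, Tc1_B hB]
  set X := c ⊔ cs with hX
  set Q := TAux I0 I1 (c \ z') with hQ
  -- z = (z ⊓ z') ⊔ (z ⊓ (c \ z'))
  have hzd : z = z ⊓ z' ⊔ z ⊓ (c \ z') := by
    conv_lhs => rw [← inf_eq_left.mpr hz, ← sup_sdiff_cancel_right hz', inf_sup_left]
  have hA1 : CA I0 I1 (z ⊓ z') := hAzz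
  have hA2 : CA I0 I1 (z ⊓ (c \ z')) := CA_mono inf_le_left hA
  have hTz : TAux I0 I1 z = TAux I0 I1 (z ⊓ z') ⊔ TAux I0 I1 (z ⊓ (c \ z')) := by
    conv_lhs => rw [hzd]
    exact TAux_sup hd h0 h1 hA1 hA2
  have hd1 : TAux I0 I1 (z ⊓ z') ⊓ Q = ⊥ := by
    rw [← TAux_inf hd h0 h1 hA1 hq]
    have : z ⊓ z' ⊓ (c \ z') = ⊥ := by
      refine le_bot_iff.mp ?_
      calc z ⊓ z' ⊓ (c \ z') ≤ z' ⊓ (c \ z') := inf_le_inf_right _ inf_le_right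
      _ ≤ z' ⊓ z'ᶜ := inf_le_inf_left _ (by rw [sdiff_eq]; exact inf_le_right)
      _ = ⊥ := inf_compl_eq_bot
    rw [this, TAux_bot hd h0 h1]
  have hd2 : TAux I0 I1 (z ⊓ (c \ z')) ≤ Q := TAux_mono hd h0 h1 hA2 hq inf_le_right
  have hZle : TAux I0 I1 z ≤ X := ((TAux_le z).trans hz).trans le_sup_left
  calc TAux I0 I1 (z ⊓ z')
      = TAux I0 I1 (z ⊓ z') \ Q ⊔ TAux I0 I1 (z ⊓ (c \ z')) \ Q := by
        rw [(disjoint_iff.mpr hd1).sdiff_eq_left, sdiff_eq_bot_iff.mpr hd2, sup_bot_eq]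
  _ = TAux I0 I1 z \ Q := by rw [← sup_sdiff, ← hTz]
  _ = TAux I0 I1 z ⊓ (X \ Q) := by
        rw [sdiff_eq, sdiff_eq, ← inf_assoc, inf_eq_left.mpr hZle]

include hd h0 h1 hm1 hm2 in
lemma Tc1_inf {z z' : B} (hz : z ≤ c) (hz' : z' ≤ c) :
    Tc1 I0 I1 c cs (z ⊓ z') = Tc1 I0 I1 c cs z ⊓ Tc1 I0 I1 c cs z' := by
  by_cases hA : CA I0 I1 z <;> by_cases hA' : CA I0 I1 z'
  · rw [Tc1_A (CA_mono inf_le_left hA), Tc1_A hA, Tc1_A hA', TAux_inf hd h0 h1 hA hA']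
  · exact Tc1_inf_AB hd h0 h1 hm2 hz hz' hA hA'
  · rw [inf_comm z z', inf_comm (Tc1 I0 I1 c cs z)]
    exact Tc1_inf_AB hd h0 h1 hm2 hz' hz hA' hA
  · have hq : CA I0 I1 (c \ z) := (hm2 z hz).resolve_left hA
    have hq' : CA I0 I1 (c \ z') := (hm2 z' hz').resolve_left hA'
    have hBzz : ¬ CA I0 I1 (z ⊓ z') := by
      intro h
      refine CA_not_both h0 h1 hm1 (inf_le_left.trans hz) h ?_
      rw [sdiff_inf]
      exact CA_sup h0 h1 hq hq'
    rw [Tc1_B hBzz, Tc1_B hA, Tc1_B hA', sdiff_inf (a := c), TAux_sup hd h0 h1 hq hq',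
      sdiff_sup]

end Tc1Sec

noncomputable def TbP (low : Prop) (I : Set B) (bs : B) (z : B) : B :=
  if low then (if z ∈ I then ⊥ else bs) else (if z ∈ I then z else z ⊔ bs)

section TbSec

variable {I : Set B} {bb bs : B} {low : Prop}
variable (hid : IsIdealBelow bb I)
variable (hnb : bb ∉ I)
variable (hmax : ∀ z ≤ bb, z ∈ I ∨ bb \ z ∈ I)

include hid hnb in
lemma TbP_prime {z z' : B} (hz : z ≤ bb) (hz' : z' ≤ bb) (h : z ∉ I) (h' : z' ∉ I)
    (hmaxz : bb \ z ∈ I) (hmaxz' : bb \ z' ∈ I) : z ⊓ z' ∉ I := by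
  intro hin
  have h1 : bb \ z ⊔ bb \ z' ∈ I := hid.2.2.2 _ hmaxz _ hmaxz'
  have h2 : bb \ (z ⊓ z') ∈ I := by rwa [sdiff_inf]
  have h3 : bb ∈ I := by
    have := hid.2.2.2 _ h2 _ hin
    rwa [sdiff_sup_cancel (inf_le_left.trans hz)] at this
  exact hnb h3

include hid in
lemma TbP_bot : TbP low I bs ⊥ = ⊥ := by
  unfold TbP
  by_cases hl : low
  · rw [if_pos hl, if_pos hid.1]
  · rw [if_neg hl, if_pos hid.1]

include hnb in
lemma TbP_top_low (hl : low) : TbP low I bs bb = bs := by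
  unfold TbP; rw [if_pos hl, if_neg hnb]

include hnb in
lemma TbP_top_high (hl : ¬ low) : TbP low I bs bb = bb ⊔ bs := by
  unfold TbP; rw [if_neg hl, if_neg hnb]

lemma TbP_le_low (hl : low) {z : B} : TbP low I bs z ≤ bs := by
  unfold TbP; rw [if_pos hl]
  split
  · exact bot_le
  · exact le_rfl

lemma TbP_le_high (hl : ¬ low) {z : B} (hz : z ≤ bb) : TbP low I bs z ≤ bb ⊔ bs := by
  unfold TbP; rw [if_neg hl]
  split
  · exact hz.trans le_sup_left
  · exact sup_le_sup_right hz _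

include hid in
lemma TbP_sup {z z' : B} (hz : z ≤ bb) (hz' : z' ≤ bb) :
    TbP low I bs (z ⊔ z') = TbP low I bs z ⊔ TbP low I bs z' := by
  have hdc : ∀ a b : B, a ⊔ b ∈ I → a ∈ I := fun a b hab => hid.2.2.1 _ _ hab le_sup_left
  have hdc' : ∀ a b : B, a ⊔ b ∈ I → b ∈ I := fun a b hab => hid.2.2.1 _ _ hab le_sup_right
  unfold TbP
  by_cases hl : low <;> [rw [if_pos hl, if_pos hl, if_pos hl];
    rw [if_neg hl, if_neg hl, if_neg hl]] <;>
    by_cases h : z ∈ I <;> by_cases h' : z' ∈ I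
  · rw [if_pos h, if_pos h', if_pos (hid.2.2.2 _ h _ h')]; simp
  · rw [if_pos h, if_neg h', if_neg (fun hin => h' (hdc' _ _ hin))]; simp
  · rw [if_neg h, if_pos h', if_neg (fun hin => h (hdc _ _ hin))]; simp
  · rw [if_neg h, if_neg h', if_neg (fun hin => h (hdc _ _ hin))]; simp
  · rw [if_pos h, if_pos h', if_pos (hid.2.2.2 _ h _ h')]
  · rw [if_pos h, if_neg h', if_neg (fun hin => h' (hdc' _ _ hin)), sup_assoc]
  · rw [if_neg h, if_pos h', if_neg (fun hin => h (hdc _ _ hin)), sup_right_comm]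
  · rw [if_neg h, if_neg h', if_neg (fun hin => h (hdc _ _ hin)), sup_sup_sup_comm,
      sup_idem]

include hid hnb hmax in
lemma TbP_inf (hdbs : ¬ low → Disjoint bb bs) {z z' : B} (hz : z ≤ bb) (hz' : z' ≤ bb) :
    TbP low I bs (z ⊓ z') = TbP low I bs z ⊓ TbP low I bs z' := by
  have hL : z ∈ I → z ⊓ z' ∈ I := fun h => hid.2.2.1 _ _ h inf_le_left
  have hR : z' ∈ I → z ⊓ z' ∈ I := fun h => hid.2.2.1 _ _ h inf_le_right
  unfold TbP
  by_cases hl : low <;> [rw [if_pos hl, if_pos hl, if_pos hl];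
    rw [if_neg hl, if_neg hl, if_neg hl]] <;>
    by_cases h : z ∈ I <;> by_cases h' : z' ∈ I
  · rw [if_pos h, if_pos h', if_pos (hL h)]; simp
  · rw [if_pos h, if_neg h', if_pos (hL h)]; simp
  · rw [if_neg h, if_pos h', if_pos (hR h')]; simp
  · have hmz := (hmax z hz).resolve_left h
    have hmz' := (hmax z' hz').resolve_left h'
    rw [if_neg h, if_neg h', if_neg (TbP_prime hid hnb hz hz' h h' hmz hmz')]; simp
  · rw [if_pos h, if_pos h', if_pos (hL h)]
  · rw [if_pos h, if_neg h', if_pos (hL h), inf_sup_left,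
      disjoint_iff.mp ((hdbs hl).mono_left hz), sup_bot_eq]
  · rw [if_neg h, if_pos h', if_pos (hR h'), inf_sup_right,
      disjoint_iff.mp (((hdbs hl).mono_left hz').symm), sup_bot_eq]
  · have hmz := (hmax z hz).resolve_left h
    have hmz' := (hmax z' hz').resolve_left h'
    rw [if_neg h, if_neg h', if_neg (TbP_prime hid hnb hz hz' h h' hmz hmz'), sup_inf_right]

end TbSec

lemma sdiff_sdiff_piece {bb s z : B} (hz : z ≤ bb) (hd : Disjoint bb s) :
    (bb ⊔ s) \ (bb \ z) = z ⊔ s := by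
  have h1 : bb ⊓ (bbᶜ ⊔ z) = z := by
    rw [inf_sup_left, inf_compl_eq_bot, bot_sup_eq, inf_eq_right.mpr hz]
  have h2 : s ⊓ (bbᶜ ⊔ z) = s :=
    inf_eq_left.mpr ((hd.symm.le_compl_right).trans le_sup_left)
  rw [sdiff_eq (x := bb), sdiff_eq (x := bb ⊔ s), compl_inf, compl_compl, inf_sup_right,
    h1, h2]

lemma expand3 (p q r p' q' r' : B) :
    (p ⊔ q ⊔ r) ⊓ (p' ⊔ q' ⊔ r') =
      ((p ⊓ p' ⊔ p ⊓ q') ⊔ p ⊓ r') ⊔ ((q ⊓ p' ⊔ q ⊓ q') ⊔ q ⊓ r') ⊔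
        ((r ⊓ p' ⊔ r ⊓ q') ⊔ r ⊓ r') := by
  simp only [inf_sup_left, inf_sup_right]
  ac_rfl
/-- Given a scheme on `B`, there is a unique endomorphism `T` of `B` satisfying the
conditions (i)-(v). -/
theorem scheme_endomorphism {n m k : ℕ} (hk : k ≤ n)
    (a₀ a₁ : B) (b : Fin n → B) (c : Fin m → B)
    -- the partition of 1
    (hd01 : Disjoint a₀ a₁)
    (hd0b : ∀ i, Disjoint a₀ (b i)) (hd1b : ∀ i, Disjoint a₁ (b i))
    (hd0c : ∀ j, Disjoint a₀ (c j)) (hd1c : ∀ j, Disjoint a₁ (c j))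
    (hdbb : ∀ i i', i ≠ i' → Disjoint (b i) (b i'))
    (hdcc : ∀ j j', j ≠ j' → Disjoint (c j) (c j'))
    (hdbc : ∀ i j, Disjoint (b i) (c j))
    (hcover : a₀ ⊔ a₁ ⊔ Finset.univ.sup b ⊔ Finset.univ.sup c = ⊤)
    -- maximal nonprincipal ideals `I ℓ` of `B↾b ℓ`
    (I : Fin n → Set B)
    (hI : ∀ ℓ, IsIdealBelow (b ℓ) (I ℓ) ∧ Nonprincipal (I ℓ) ∧ b ℓ ∉ I ℓ ∧
      ∀ z ≤ b ℓ, z ∈ I ℓ ∨ b ℓ \ z ∈ I ℓ)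
    -- nonprincipal disjoint ideals `I⁰ ℓ, I¹ ℓ` below `c ℓ` generating a maximal ideal
    (I0 I1 : Fin m → Set B)
    (hI0 : ∀ ℓ, IsIdealBelow (c ℓ) (I0 ℓ) ∧ Nonprincipal (I0 ℓ))
    (hI1 : ∀ ℓ, IsIdealBelow (c ℓ) (I1 ℓ) ∧ Nonprincipal (I1 ℓ))
    (hIdisj : ∀ ℓ, ∀ u ∈ I0 ℓ, ∀ v ∈ I1 ℓ, u ⊓ v = ⊥)
    (hImax : ∀ ℓ, (¬ ∃ u ∈ I0 ℓ, ∃ v ∈ I1 ℓ, c ℓ ≤ u ⊔ v) ∧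
      ∀ z ≤ c ℓ, (∃ u ∈ I0 ℓ, ∃ v ∈ I1 ℓ, z ≤ u ⊔ v) ∨
        (∃ u ∈ I0 ℓ, ∃ v ∈ I1 ℓ, c ℓ \ z ≤ u ⊔ v))
    -- the partition `b*₀,…,b*_{n−1}, c*₀,…,c*_{m−1}` of `a₀ ∪ b₀ ∪ … ∪ b_{k−1}`
    (bs : Fin n → B) (cs : Fin m → B)
    (hsbb : ∀ i i', i ≠ i' → Disjoint (bs i) (bs i'))
    (hscc : ∀ j j', j ≠ j' → Disjoint (cs j) (cs j'))
    (hsbc : ∀ i j, Disjoint (bs i) (cs j))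
    (hscover : Finset.univ.sup bs ⊔ Finset.univ.sup cs =
      a₀ ⊔ (Finset.univ.filter (fun i : Fin n => i.val < k)).sup b) :
    ∃! h : B → B, IsEndo h ∧
      -- (i)
      (∀ z ≤ a₀, h z = ⊥) ∧
      (∀ ℓ : Fin n, ℓ.val < k → ∀ z ∈ I ℓ, h z = ⊥) ∧
      (∀ ℓ : Fin m, ∀ z ∈ I0 ℓ, h z = ⊥) ∧
      -- (ii)
      (∀ z ≤ a₁, h z = z) ∧
      (∀ ℓ : Fin n, k ≤ ℓ.val → ∀ z ∈ I ℓ, h z = z) ∧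
      (∀ ℓ : Fin m, ∀ z ∈ I1 ℓ, h z = z) ∧
      -- (iii)
      (∀ ℓ : Fin n, ℓ.val < k → h (b ℓ) = bs ℓ) ∧
      -- (iv)
      (∀ ℓ : Fin n, k ≤ ℓ.val → h (b ℓ) = b ℓ ⊔ bs ℓ) ∧
      -- (v)
      (∀ ℓ : Fin m, h (c ℓ) = c ℓ ⊔ cs ℓ) := by
  classical
  -- abbreviations for hypotheses
  have hid : ∀ ℓ, IsIdealBelow (b ℓ) (I ℓ) := fun ℓ => (hI ℓ).1
  have hnb : ∀ ℓ, b ℓ ∉ I ℓ := fun ℓ => (hI ℓ).2.2.1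
  have hmaxb : ∀ ℓ, ∀ z ≤ b ℓ, z ∈ I ℓ ∨ b ℓ \ z ∈ I ℓ := fun ℓ => (hI ℓ).2.2.2
  have h0 : ∀ ℓ, IsIdealBelow (c ℓ) (I0 ℓ) := fun ℓ => (hI0 ℓ).1
  have h1 : ∀ ℓ, IsIdealBelow (c ℓ) (I1 ℓ) := fun ℓ => (hI1 ℓ).1
  have hm1 : ∀ ℓ, ¬ ∃ u ∈ I0 ℓ, ∃ v ∈ I1 ℓ, c ℓ ≤ u ⊔ v := fun ℓ => (hImax ℓ).1
  have hm2 : ∀ ℓ, ∀ z ≤ c ℓ, CA (I0 ℓ) (I1 ℓ) z ∨ CA (I0 ℓ) (I1 ℓ) (c ℓ \ z) :=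
    fun ℓ => (hImax ℓ).2
  -- the common upper bound of the `bs`/`cs` partition
  set S : B := a₀ ⊔ (Finset.univ.filter (fun i : Fin n => i.val < k)).sup b with hS
  have hbsS : ∀ ℓ, bs ℓ ≤ S := fun ℓ =>
    ((Finset.le_sup (Finset.mem_univ ℓ)).trans le_sup_left).trans hscover.le
  have hcsS : ∀ ℓ, cs ℓ ≤ S := fun ℓ =>
    ((Finset.le_sup (Finset.mem_univ ℓ)).trans le_sup_right).trans hscover.le
  have hSb : ∀ ℓ : Fin n, ¬ ℓ.val < k → Disjoint S (b ℓ) := by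
    intro ℓ hℓ
    refine Disjoint.sup_left (hd0b ℓ) ?_
    refine (disjoint_finsup_right fun i hi => ?_).symm
    refine hdbb ℓ i fun hii => ?_
    rw [← hii] at hi
    exact hℓ (Finset.mem_filter.mp hi).2
  have hSc : ∀ ℓ : Fin m, Disjoint S (c ℓ) := by
    intro ℓ
    refine Disjoint.sup_left (hd0c ℓ) ?_
    exact (disjoint_finsup_right fun i _ => (hdbc i ℓ).symm).symm
  have hSa1 : Disjoint S a₁ := by
    refine Disjoint.sup_left hd01 ?_
    exact (disjoint_finsup_right fun i _ => (hd1b i)).symm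
  -- the piece maps
  set Tb' : Fin n → B → B := fun ℓ z => TbP (ℓ.val < k) (I ℓ) (bs ℓ) z with hTb'
  set Tc' : Fin m → B → B := fun ℓ z => Tc1 (I0 ℓ) (I1 ℓ) (c ℓ) (cs ℓ) z with hTc'
  set Rb : Fin n → B := fun ℓ => if ℓ.val < k then bs ℓ else b ℓ ⊔ bs ℓ with hRb
  set T : B → B := fun x => x ⊓ a₁ ⊔ Finset.univ.sup (fun ℓ => Tb' ℓ (x ⊓ b ℓ)) ⊔
      Finset.univ.sup (fun ℓ => Tc' ℓ (x ⊓ c ℓ)) with hT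
  -- range bounds
  have hdbsel : ∀ ℓ : Fin n, ¬ ℓ.val < k → Disjoint (b ℓ) (bs ℓ) :=
    fun ℓ h => ((hSb ℓ h).mono_left (hbsS ℓ)).symm
  have hbsRb : ∀ ℓ, bs ℓ ≤ Rb ℓ := by
    intro ℓ; rw [hRb]; dsimp only; split
    · exact le_rfl
    · exact le_sup_right
  have hTble : ∀ (ℓ : Fin n) (z : B), z ≤ b ℓ → Tb' ℓ z ≤ Rb ℓ := by
    intro ℓ z hz
    rw [hRb]; dsimp only; split_ifs with h
    · exact TbP_le_low h
    · exact TbP_le_high h hz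
  have hTcle : ∀ (ℓ : Fin m) (z : B), z ≤ c ℓ → Tc' ℓ z ≤ c ℓ ⊔ cs ℓ :=
    fun ℓ z hz => Tc1_le hz
  -- pairwise disjointness of the ranges
  have RbDisj : ∀ ℓ ℓ' : Fin n, ℓ ≠ ℓ' → Rb ℓ ⊓ Rb ℓ' = ⊥ := by
    intro ℓ ℓ' hne
    have hbsbs : Disjoint (bs ℓ) (bs ℓ') := hsbb ℓ ℓ' hne
    have hbsb : ∀ h' : ¬ ℓ'.val < k, Disjoint (bs ℓ) (b ℓ') :=
      fun h' => (hSb ℓ' h').mono_left (hbsS ℓ)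
    have hbbs : ∀ h : ¬ ℓ.val < k, Disjoint (b ℓ) (bs ℓ') :=
      fun h => ((hSb ℓ h).mono_left (hbsS ℓ')).symm
    rw [hRb]; dsimp only; split_ifs with h h' h'
    · exact disjoint_iff.mp hbsbs
    · exact disjoint_iff.mp (Disjoint.sup_right (hbsb h') hbsbs)
    · exact disjoint_iff.mp (Disjoint.sup_left (hbbs h) hbsbs)
    · exact disjoint_iff.mp (Disjoint.sup_left
        (Disjoint.sup_right (hdbb ℓ ℓ' hne) (hbbs h))
        (Disjoint.sup_right ((hbsb h').symm.symm) hbsbs))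
  have RcDisj : ∀ ℓ ℓ' : Fin m, ℓ ≠ ℓ' → (c ℓ ⊔ cs ℓ) ⊓ (c ℓ' ⊔ cs ℓ') = ⊥ := by
    intro ℓ ℓ' hne
    have hccs : Disjoint (c ℓ) (cs ℓ') := ((hSc ℓ).mono_left (hcsS ℓ')).symm
    have hcsc : Disjoint (cs ℓ) (c ℓ') := (hSc ℓ').mono_left (hcsS ℓ)
    exact disjoint_iff.mp (Disjoint.sup_left
      (Disjoint.sup_right (hdcc ℓ ℓ' hne) hccs)
      (Disjoint.sup_right hcsc (hscc ℓ ℓ' hne)))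
  have RbRc : ∀ (ℓ : Fin n) (ℓ' : Fin m), Rb ℓ ⊓ (c ℓ' ⊔ cs ℓ') = ⊥ := by
    intro ℓ ℓ'
    have hbsc : Disjoint (bs ℓ) (c ℓ') := (hSc ℓ').mono_left (hbsS ℓ)
    have hbscs : Disjoint (bs ℓ) (cs ℓ') := hsbc ℓ ℓ'
    rw [hRb]; dsimp only; split_ifs with h
    · exact disjoint_iff.mp (Disjoint.sup_right hbsc hbscs)
    · have hbcs : Disjoint (b ℓ) (cs ℓ') := ((hSb ℓ h).mono_left (hcsS ℓ')).symm
      exact disjoint_iff.mp (Disjoint.sup_left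
        (Disjoint.sup_right (hdbc ℓ ℓ') hbcs)
        (Disjoint.sup_right hbsc hbscs))
  have a1Rb : ∀ ℓ : Fin n, a₁ ⊓ Rb ℓ = ⊥ := by
    intro ℓ
    have h1bs : Disjoint a₁ (bs ℓ) := (hSa1.mono_left (hbsS ℓ)).symm
    rw [hRb]; dsimp only; split_ifs with h
    · exact disjoint_iff.mp h1bs
    · exact disjoint_iff.mp (Disjoint.sup_right (hd1b ℓ) h1bs)
  have a1Rc : ∀ ℓ : Fin m, a₁ ⊓ (c ℓ ⊔ cs ℓ) = ⊥ := fun ℓ =>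
    disjoint_iff.mp (Disjoint.sup_right (hd1c ℓ) (hSa1.mono_left (hcsS ℓ)).symm)
  -- endomorphism properties of `T`
  have hTsup : ∀ x y, T (x ⊔ y) = T x ⊔ T y := by
    intro x y
    rw [hT]; dsimp only
    have hb : (Finset.univ.sup fun ℓ => Tb' ℓ ((x ⊔ y) ⊓ b ℓ)) =
        (Finset.univ.sup fun ℓ => Tb' ℓ (x ⊓ b ℓ)) ⊔
          (Finset.univ.sup fun ℓ => Tb' ℓ (y ⊓ b ℓ)) := by
      rw [← sup_pointwise]
      refine Finset.sup_congr rfl fun ℓ _ => ?_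
      rw [inf_sup_right]
      exact TbP_sup (hid ℓ) inf_le_right inf_le_right
    have hc : (Finset.univ.sup fun ℓ => Tc' ℓ ((x ⊔ y) ⊓ c ℓ)) =
        (Finset.univ.sup fun ℓ => Tc' ℓ (x ⊓ c ℓ)) ⊔
          (Finset.univ.sup fun ℓ => Tc' ℓ (y ⊓ c ℓ)) := by
      rw [← sup_pointwise]
      refine Finset.sup_congr rfl fun ℓ _ => ?_
      rw [inf_sup_right]
      exact Tc1_sup (hIdisj ℓ) (h0 ℓ) (h1 ℓ) (hm1 ℓ) (hm2 ℓ) inf_le_right inf_le_right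
    rw [hb, hc, inf_sup_right]
    ac_rfl
  have hTinf : ∀ x y, T (x ⊓ y) = T x ⊓ T y := by
    intro x y
    rw [hT]; dsimp only
    rw [expand3]
    have c1 : x ⊓ a₁ ⊓ (y ⊓ a₁) = x ⊓ y ⊓ a₁ := by rw [inf_inf_inf_comm, inf_idem]
    have c2 : x ⊓ a₁ ⊓ (Finset.univ.sup fun ℓ => Tb' ℓ (y ⊓ b ℓ)) = ⊥ := by
      rw [Finset.sup_inf_distrib_left]
      refine sup_all_bot _ _ fun ℓ _ => ?_
      refine le_bot_iff.mp ?_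
      calc x ⊓ a₁ ⊓ Tb' ℓ (y ⊓ b ℓ) ≤ a₁ ⊓ Rb ℓ :=
        inf_le_inf inf_le_right (hTble ℓ _ inf_le_right)
      _ = ⊥ := a1Rb ℓ
    have c3 : x ⊓ a₁ ⊓ (Finset.univ.sup fun ℓ => Tc' ℓ (y ⊓ c ℓ)) = ⊥ := by
      rw [Finset.sup_inf_distrib_left]
      refine sup_all_bot _ _ fun ℓ _ => ?_
      refine le_bot_iff.mp ?_
      calc x ⊓ a₁ ⊓ Tc' ℓ (y ⊓ c ℓ) ≤ a₁ ⊓ (c ℓ ⊔ cs ℓ) :=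
        inf_le_inf inf_le_right (hTcle ℓ _ inf_le_right)
      _ = ⊥ := a1Rc ℓ
    have c4 : (Finset.univ.sup fun ℓ => Tb' ℓ (x ⊓ b ℓ)) ⊓ (y ⊓ a₁) = ⊥ := by
      rw [Finset.sup_inf_distrib_right]
      refine sup_all_bot _ _ fun ℓ _ => ?_
      refine le_bot_iff.mp ?_
      calc Tb' ℓ (x ⊓ b ℓ) ⊓ (y ⊓ a₁) ≤ Rb ℓ ⊓ a₁ :=
        inf_le_inf (hTble ℓ _ inf_le_right) inf_le_right
      _ = ⊥ := by rw [inf_comm]; exact a1Rb ℓ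
    have c5 : (Finset.univ.sup fun ℓ => Tb' ℓ (x ⊓ b ℓ)) ⊓
        (Finset.univ.sup fun ℓ => Tb' ℓ (y ⊓ b ℓ)) =
        Finset.univ.sup fun ℓ => Tb' ℓ (x ⊓ y ⊓ b ℓ) := by
      rw [sup_inf_diag _ _ fun ℓ ℓ' hne => le_bot_iff.mp
        ((inf_le_inf (hTble ℓ _ inf_le_right) (hTble ℓ' _ inf_le_right)).trans_eq
          (RbDisj ℓ ℓ' hne))]
      refine Finset.sup_congr rfl fun ℓ _ => ?_
      rw [← TbP_inf (hid ℓ) (hnb ℓ) (hmaxb ℓ) (hdbsel ℓ) inf_le_right inf_le_right,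
        inf_inf_inf_comm, inf_idem]
    have c6 : (Finset.univ.sup fun ℓ => Tb' ℓ (x ⊓ b ℓ)) ⊓
        (Finset.univ.sup fun ℓ => Tc' ℓ (y ⊓ c ℓ)) = ⊥ := by
      rw [Finset.sup_inf_distrib_right]
      refine sup_all_bot _ _ fun ℓ _ => ?_
      rw [Finset.sup_inf_distrib_left]
      refine sup_all_bot _ _ fun ℓ' _ => ?_
      refine le_bot_iff.mp ?_
      calc Tb' ℓ (x ⊓ b ℓ) ⊓ Tc' ℓ' (y ⊓ c ℓ') ≤ Rb ℓ ⊓ (c ℓ' ⊔ cs ℓ') :=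
        inf_le_inf (hTble ℓ _ inf_le_right) (hTcle ℓ' _ inf_le_right)
      _ = ⊥ := RbRc ℓ ℓ'
    have c7 : (Finset.univ.sup fun ℓ => Tc' ℓ (x ⊓ c ℓ)) ⊓ (y ⊓ a₁) = ⊥ := by
      rw [Finset.sup_inf_distrib_right]
      refine sup_all_bot _ _ fun ℓ _ => ?_
      refine le_bot_iff.mp ?_
      calc Tc' ℓ (x ⊓ c ℓ) ⊓ (y ⊓ a₁) ≤ (c ℓ ⊔ cs ℓ) ⊓ a₁ :=
        inf_le_inf (hTcle ℓ _ inf_le_right) inf_le_right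
      _ = ⊥ := by rw [inf_comm]; exact a1Rc ℓ
    have c8 : (Finset.univ.sup fun ℓ => Tc' ℓ (x ⊓ c ℓ)) ⊓
        (Finset.univ.sup fun ℓ => Tb' ℓ (y ⊓ b ℓ)) = ⊥ := by
      rw [Finset.sup_inf_distrib_right]
      refine sup_all_bot _ _ fun ℓ _ => ?_
      rw [Finset.sup_inf_distrib_left]
      refine sup_all_bot _ _ fun ℓ' _ => ?_
      refine le_bot_iff.mp ?_
      calc Tc' ℓ (x ⊓ c ℓ) ⊓ Tb' ℓ' (y ⊓ b ℓ') ≤ (c ℓ ⊔ cs ℓ) ⊓ Rb ℓ' :=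
        inf_le_inf (hTcle ℓ _ inf_le_right) (hTble ℓ' _ inf_le_right)
      _ = ⊥ := by rw [inf_comm]; exact RbRc ℓ' ℓ
    have c9 : (Finset.univ.sup fun ℓ => Tc' ℓ (x ⊓ c ℓ)) ⊓
        (Finset.univ.sup fun ℓ => Tc' ℓ (y ⊓ c ℓ)) =
        Finset.univ.sup fun ℓ => Tc' ℓ (x ⊓ y ⊓ c ℓ) := by
      rw [sup_inf_diag _ _ fun ℓ ℓ' hne => le_bot_iff.mp
        ((inf_le_inf (hTcle ℓ _ inf_le_right) (hTcle ℓ' _ inf_le_right)).trans_eq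
          (RcDisj ℓ ℓ' hne))]
      refine Finset.sup_congr rfl fun ℓ _ => ?_
      rw [← Tc1_inf (hIdisj ℓ) (h0 ℓ) (h1 ℓ) (hm1 ℓ) (hm2 ℓ) inf_le_right inf_le_right,
        inf_inf_inf_comm, inf_idem]
    rw [c1, c2, c3, c4, c5, c6, c7, c8, c9]
    simp only [bot_sup_eq, sup_bot_eq]
  have hTbot : T ⊥ = ⊥ := by
    rw [hT]; dsimp only
    rw [bot_inf_eq]
    have hb : (Finset.univ.sup fun ℓ => Tb' ℓ ((⊥ : B) ⊓ b ℓ)) = ⊥ :=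
      sup_all_bot _ _ fun ℓ _ => by rw [bot_inf_eq]; exact TbP_bot (hid ℓ)
    have hc : (Finset.univ.sup fun ℓ => Tc' ℓ ((⊥ : B) ⊓ c ℓ)) = ⊥ :=
      sup_all_bot _ _ fun ℓ _ => by
        rw [bot_inf_eq]; exact Tc1_bot (hIdisj ℓ) (h0 ℓ) (h1 ℓ)
    rw [hb, hc, sup_bot_eq, sup_bot_eq]
  have hTtop : T ⊤ = ⊤ := by
    rw [hT]; dsimp only
    refine top_unique ((le_of_eq hcover.symm).trans ?_)
    have e1 : a₀ ≤ Finset.univ.sup bs ⊔ Finset.univ.sup cs := hscover.ge.trans' le_sup_left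
    have ebs : Finset.univ.sup bs ≤ Finset.univ.sup fun ℓ => Tb' ℓ (⊤ ⊓ b ℓ) := by
      refine Finset.sup_le fun ℓ _ => ?_
      refine Finset.le_sup_of_le (Finset.mem_univ ℓ) ?_
      rw [top_inf_eq]
      by_cases hl : ℓ.val < k
      · rw [show Tb' ℓ (b ℓ) = bs ℓ from TbP_top_low (hnb ℓ) hl]
      · rw [show Tb' ℓ (b ℓ) = b ℓ ⊔ bs ℓ from TbP_top_high (hnb ℓ) hl]
        exact le_sup_right
    have ecs : Finset.univ.sup cs ≤ Finset.univ.sup fun ℓ => Tc' ℓ (⊤ ⊓ c ℓ) := by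
      refine Finset.sup_le fun ℓ _ => ?_
      refine Finset.le_sup_of_le (Finset.mem_univ ℓ) ?_
      rw [top_inf_eq,
        show Tc' ℓ (c ℓ) = c ℓ ⊔ cs ℓ from Tc1_top (hIdisj ℓ) (h0 ℓ) (h1 ℓ) (hm1 ℓ)]
      exact le_sup_right
    set Bsup := Finset.univ.sup fun ℓ => Tb' ℓ (⊤ ⊓ b ℓ) with hBsup
    set Csup := Finset.univ.sup fun ℓ => Tc' ℓ (⊤ ⊓ c ℓ) with hCsup
    have eS : S ≤ ⊤ ⊓ a₁ ⊔ Bsup ⊔ Csup := by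
      rw [← hscover]
      exact sup_le (ebs.trans (le_sup_right.trans le_sup_left)) (ecs.trans le_sup_right)
    refine sup_le (sup_le (sup_le ?_ ?_) ?_) ?_
    · exact (le_sup_left.trans_eq hS.symm).trans eS
    · exact (le_inf le_top le_rfl).trans (le_sup_left.trans le_sup_left)
    · refine Finset.sup_le fun ℓ _ => ?_
      by_cases hl : ℓ.val < k
      · refine le_trans ?_ eS
        rw [hS]
        exact (Finset.le_sup (Finset.mem_filter.mpr ⟨Finset.mem_univ ℓ, hl⟩)).trans
          le_sup_right
      · refine le_sup_left.trans' (le_sup_right.trans' ?_)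
        rw [hBsup]
        refine Finset.le_sup_of_le (Finset.mem_univ ℓ) ?_
        rw [top_inf_eq, show Tb' ℓ (b ℓ) = b ℓ ⊔ bs ℓ from TbP_top_high (hnb ℓ) hl]
        exact le_sup_left
    · refine le_sup_right.trans' ?_
      refine Finset.sup_le fun ℓ _ => ?_
      rw [hCsup]
      refine Finset.le_sup_of_le (Finset.mem_univ ℓ) ?_
      rw [top_inf_eq,
        show Tc' ℓ (c ℓ) = c ℓ ⊔ cs ℓ from Tc1_top (hIdisj ℓ) (h0 ℓ) (h1 ℓ) (hm1 ℓ)]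
      exact le_sup_left
  -- values of `T` on the pieces
  have hval_b : ∀ (ℓ : Fin n) (z : B), z ≤ b ℓ → T z = Tb' ℓ z := by
    intro ℓ z hz
    rw [hT]; dsimp only
    have e1 : z ⊓ a₁ = ⊥ := disjoint_iff.mp ((hd1b ℓ).symm.mono_left hz)
    have e2 : (Finset.univ.sup fun ℓ' => Tb' ℓ' (z ⊓ b ℓ')) = Tb' ℓ z := by
      rw [sup_single _ ℓ fun j hj => by
        rw [disjoint_iff.mp ((hdbb ℓ j (fun h => hj h.symm)).mono_left hz)]
        exact TbP_bot (hid j)]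
      rw [inf_eq_left.mpr hz]
    have e3 : (Finset.univ.sup fun ℓ' => Tc' ℓ' (z ⊓ c ℓ')) = ⊥ :=
      sup_all_bot _ _ fun j _ => by
        rw [disjoint_iff.mp ((hdbc ℓ j).mono_left hz)]
        exact Tc1_bot (hIdisj j) (h0 j) (h1 j)
    rw [e1, e2, e3, bot_sup_eq, sup_bot_eq]
  have hval_c : ∀ (ℓ : Fin m) (z : B), z ≤ c ℓ → T z = Tc' ℓ z := by
    intro ℓ z hz
    rw [hT]; dsimp only
    have e1 : z ⊓ a₁ = ⊥ := disjoint_iff.mp ((hd1c ℓ).symm.mono_left hz)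
    have e2 : (Finset.univ.sup fun ℓ' => Tb' ℓ' (z ⊓ b ℓ')) = ⊥ :=
      sup_all_bot _ _ fun j _ => by
        rw [disjoint_iff.mp ((hdbc j ℓ).symm.mono_left hz)]
        exact TbP_bot (hid j)
    have e3 : (Finset.univ.sup fun ℓ' => Tc' ℓ' (z ⊓ c ℓ')) = Tc' ℓ z := by
      rw [sup_single _ ℓ fun j hj => by
        rw [disjoint_iff.mp ((hdcc ℓ j (fun h => hj h.symm)).mono_left hz)]
        exact Tc1_bot (hIdisj j) (h0 j) (h1 j)]
      rw [inf_eq_left.mpr hz]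
    rw [e1, e2, e3, bot_sup_eq, bot_sup_eq]
  have hval_a0 : ∀ z ≤ a₀, T z = ⊥ := by
    intro z hz
    rw [hT]; dsimp only
    have e1 : z ⊓ a₁ = ⊥ := disjoint_iff.mp (hd01.mono_left hz)
    have e2 : (Finset.univ.sup fun ℓ' => Tb' ℓ' (z ⊓ b ℓ')) = ⊥ :=
      sup_all_bot _ _ fun j _ => by
        rw [disjoint_iff.mp ((hd0b j).mono_left hz)]
        exact TbP_bot (hid j)
    have e3 : (Finset.univ.sup fun ℓ' => Tc' ℓ' (z ⊓ c ℓ')) = ⊥ :=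
      sup_all_bot _ _ fun j _ => by
        rw [disjoint_iff.mp ((hd0c j).mono_left hz)]
        exact Tc1_bot (hIdisj j) (h0 j) (h1 j)
    rw [e1, e2, e3, sup_bot_eq, sup_bot_eq]
  have hval_a1 : ∀ z ≤ a₁, T z = z := by
    intro z hz
    rw [hT]; dsimp only
    have e1 : z ⊓ a₁ = z := inf_eq_left.mpr hz
    have e2 : (Finset.univ.sup fun ℓ' => Tb' ℓ' (z ⊓ b ℓ')) = ⊥ :=
      sup_all_bot _ _ fun j _ => by
        rw [disjoint_iff.mp ((hd1b j).symm.symm.mono_left hz)]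
        exact TbP_bot (hid j)
    have e3 : (Finset.univ.sup fun ℓ' => Tc' ℓ' (z ⊓ c ℓ')) = ⊥ :=
      sup_all_bot _ _ fun j _ => by
        rw [disjoint_iff.mp ((hd1c j).mono_left hz)]
        exact Tc1_bot (hIdisj j) (h0 j) (h1 j)
    rw [e1, e2, e3, sup_bot_eq, sup_bot_eq]
  -- `T` satisfies all the conditions
  have hTconds : IsEndo T ∧
      (∀ z ≤ a₀, T z = ⊥) ∧
      (∀ ℓ : Fin n, ℓ.val < k → ∀ z ∈ I ℓ, T z = ⊥) ∧
      (∀ ℓ : Fin m, ∀ z ∈ I0 ℓ, T z = ⊥) ∧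
      (∀ z ≤ a₁, T z = z) ∧
      (∀ ℓ : Fin n, k ≤ ℓ.val → ∀ z ∈ I ℓ, T z = z) ∧
      (∀ ℓ : Fin m, ∀ z ∈ I1 ℓ, T z = z) ∧
      (∀ ℓ : Fin n, ℓ.val < k → T (b ℓ) = bs ℓ) ∧
      (∀ ℓ : Fin n, k ≤ ℓ.val → T (b ℓ) = b ℓ ⊔ bs ℓ) ∧
      (∀ ℓ : Fin m, T (c ℓ) = c ℓ ⊔ cs ℓ) := by
    refine ⟨⟨hTsup, hTinf, hTbot, hTtop⟩, hval_a0, ?_, ?_, hval_a1, ?_, ?_, ?_, ?_, ?_⟩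
    · intro ℓ hl z hzI
      rw [hval_b ℓ z (hid ℓ |>.2.1 z hzI)]
      show TbP (ℓ.val < k) (I ℓ) (bs ℓ) z = ⊥
      unfold TbP
      rw [if_pos hl, if_pos hzI]
    · intro ℓ z hzI
      rw [hval_c ℓ z (h0 ℓ |>.2.1 z hzI)]
      exact Tc1_I0 (hIdisj ℓ) (h1 ℓ) hzI
    · intro ℓ hl z hzI
      rw [hval_b ℓ z (hid ℓ |>.2.1 z hzI)]
      show TbP (ℓ.val < k) (I ℓ) (bs ℓ) z = z
      unfold TbP
      rw [if_neg (not_lt.mpr hl), if_pos hzI]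
    · intro ℓ z hzI
      rw [hval_c ℓ z (h1 ℓ |>.2.1 z hzI)]
      exact Tc1_I1 (hIdisj ℓ) (h0 ℓ) hzI
    · intro ℓ hl
      rw [hval_b ℓ (b ℓ) le_rfl]
      exact TbP_top_low (hnb ℓ) hl
    · intro ℓ hl
      rw [hval_b ℓ (b ℓ) le_rfl]
      exact TbP_top_high (hnb ℓ) (not_lt.mpr hl)
    · intro ℓ
      rw [hval_c ℓ (c ℓ) le_rfl]
      exact Tc1_top (hIdisj ℓ) (h0 ℓ) (h1 ℓ) (hm1 ℓ)
  refine ⟨T, hTconds, ?_⟩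
  -- uniqueness
  intro h hP
  obtain ⟨⟨hsup, hinf, hbot, htop⟩, p1, p2, p3, q1, q2, q3, r1, r2, r3⟩ := hP
  funext x
  -- agreement on the b-pieces
  have agree_b : ∀ (ℓ : Fin n) (z : B), z ≤ b ℓ → h z = Tb' ℓ z := by
    intro ℓ z hz
    show h z = TbP (ℓ.val < k) (I ℓ) (bs ℓ) z
    unfold TbP
    by_cases hl : ℓ.val < k <;> [rw [if_pos hl]; rw [if_neg hl]] <;>
      by_cases hzI : z ∈ I ℓ
    · rw [if_pos hzI]; exact p2 ℓ hl z hzI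
    · rw [if_neg hzI]
      have hco : b ℓ \ z ∈ I ℓ := (hmaxb ℓ z hz).resolve_left hzI
      have e : h z = h z ⊔ h (b ℓ \ z) := by rw [p2 ℓ hl _ hco, sup_bot_eq]
      rw [e, ← hsup, sup_sdiff_cancel_right hz, r1 ℓ hl]
    · rw [if_pos hzI]; exact q2 ℓ (not_lt.mp hl) z hzI
    · rw [if_neg hzI]
      have hco : b ℓ \ z ∈ I ℓ := (hmaxb ℓ z hz).resolve_left hzI
      have e1 : h z ⊔ b ℓ \ z = b ℓ ⊔ bs ℓ := by
        conv_lhs => rw [← q2 ℓ (not_lt.mp hl) _ hco]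
        rw [← hsup, sup_sdiff_cancel_right hz]
        exact r2 ℓ (not_lt.mp hl)
      have e2 : h z ⊓ b ℓ \ z = ⊥ := by
        conv_lhs => rw [← q2 ℓ (not_lt.mp hl) _ hco]
        rw [← hinf, inf_sdiff_self_right, hbot]
      rw [compl_piece e1 e2, sdiff_sdiff_piece hz (hdbsel ℓ hl)]
  -- agreement on the c-pieces
  have agree_c : ∀ (ℓ : Fin m) (z : B), z ≤ c ℓ → h z = Tc' ℓ z := by
    intro ℓ z hz
    have hAval : ∀ w ≤ c ℓ, CA (I0 ℓ) (I1 ℓ) w → h w = TAux (I0 ℓ) (I1 ℓ) w := by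
      rintro w hw ⟨u, hu, v, hv, hwuv⟩
      rw [TAux_eq (hIdisj ℓ) hu hv hwuv]
      have e : w = w ⊓ u ⊔ w \ u := (sup_inf_sdiff w u).symm
      conv_lhs => rw [e]
      rw [hsup, p3 ℓ _ ((h0 ℓ).2.2.1 _ u hu inf_le_right),
        q3 ℓ _ ((h1 ℓ).2.2.1 _ v hv (sdiff_le_iff.mpr hwuv)), bot_sup_eq]
    show h z = Tc1 (I0 ℓ) (I1 ℓ) (c ℓ) (cs ℓ) z
    by_cases hA : CA (I0 ℓ) (I1 ℓ) z
    · rw [Tc1_A hA]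
      exact hAval z hz hA
    · have hq : CA (I0 ℓ) (I1 ℓ) (c ℓ \ z) := (hm2 ℓ z hz).resolve_left hA
      have e3 : h (c ℓ \ z) = TAux (I0 ℓ) (I1 ℓ) (c ℓ \ z) := hAval _ sdiff_le hq
      have e1 : h z ⊔ TAux (I0 ℓ) (I1 ℓ) (c ℓ \ z) = c ℓ ⊔ cs ℓ := by
        rw [← e3, ← hsup, sup_sdiff_cancel_right hz]
        exact r3 ℓ
      have e2 : h z ⊓ TAux (I0 ℓ) (I1 ℓ) (c ℓ \ z) = ⊥ := by
        rw [← e3, ← hinf, inf_sdiff_self_right, hbot]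
      rw [compl_piece e1 e2, Tc1_B hA]
  -- decompose `x` along the partition
  have hdec : x = x ⊓ a₀ ⊔ x ⊓ a₁ ⊔ (Finset.univ.sup fun ℓ => x ⊓ b ℓ) ⊔
      (Finset.univ.sup fun ℓ => x ⊓ c ℓ) := by
    conv_lhs => rw [← inf_top_eq x, ← hcover]
    rw [inf_sup_left, inf_sup_left, inf_sup_left, Finset.sup_inf_distrib_left,
      Finset.sup_inf_distrib_left]
  conv_lhs => rw [hdec]
  rw [hsup, hsup, hsup, endo_finset_sup hsup hbot, endo_finset_sup hsup hbot,
    p1 _ inf_le_right, q1 _ inf_le_right]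
  have eb : (Finset.univ.sup fun ℓ => h (x ⊓ b ℓ)) =
      Finset.univ.sup fun ℓ => Tb' ℓ (x ⊓ b ℓ) :=
    Finset.sup_congr rfl fun ℓ _ => agree_b ℓ _ inf_le_right
  have ec : (Finset.univ.sup fun ℓ => h (x ⊓ c ℓ)) =
      Finset.univ.sup fun ℓ => Tc' ℓ (x ⊓ c ℓ) :=
    Finset.sup_congr rfl fun ℓ _ => agree_c ℓ _ inf_le_right
  rw [eb, ec, bot_sup_eq, hT]
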